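/- Let F be a field, G the dihedral group of order 2n (n odd, gcd(n, char F) = 1 if char F > 0), H ⊆ G cyclic of order n, and e a primitive idempotent of FH with e·ē = 0 (i.e., ē ≠ e). Then e + ē is a central idempotent of FG, and the left ideal C = FG·e satisfies C·C̄ = 0; in particular ⟨c, c′⟩ = 0 for all c, c′ ∈ C, so C is a self-orthogonal code. -/

import Mathlib

/-!
Elements of `FH` commute, so `ē e = e ē = 0`; together with `ē² = ē` (the bar map is an
anti-automorphism) this makes `e + ē` idempotent. It is central because its coefficient function
vanishes off the rotations and is invariant under inversion, and conjugating a rotation by a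
reflection inverts it. Finally `(m e)(m' e)‾ = m (e ē) m'‾ = 0`, and the coefficient at `1` of
`c c̄'` is the inner product `⟨c, c'⟩`.
-/

/-- The bar map on a group algebra, sending `∑ a_x x` to `∑ a_x x⁻¹`. -/
noncomputable def MonoidAlgebra.bar {F G : Type*} [Semiring F] [Group G]
    (a : MonoidAlgebra F G) : MonoidAlgebra F G :=
  MonoidAlgebra.ofCoeff (Finsupp.equivMapDomain (Equiv.inv G) a.coeff)

namespace MonoidAlgebra

section Bar

variable {F G : Type*} [Group G]

section Semiring

variable [Semiring F]

@[simp]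
lemma coeff_bar (a : MonoidAlgebra F G) (x : G) : (bar a).coeff x = a.coeff x⁻¹ := rfl

@[simp]
lemma bar_add (a b : MonoidAlgebra F G) : bar (a + b) = bar a + bar b := by
  ext x; simp

@[simp]
lemma bar_single (g : G) (r : F) : bar (single g r) = single g⁻¹ r := by
  classical
  ext x
  simp only [coeff_bar, coeff_single, Finsupp.single_apply, inv_eq_iff_eq_inv]

lemma coeff_mul_bar_one [Fintype G] (a b : MonoidAlgebra F G) :
    (a * bar b).coeff 1 = ∑ g : G, a.coeff g * b.coeff g := by
  rw [coeff_mul_apply_left, Finsupp.sum_fintype _ _ fun _ => zero_mul _]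
  simp

end Semiring

variable [CommSemiring F]

lemma bar_mul (a b : MonoidAlgebra F G) : bar (a * b) = bar b * bar a := by
  induction a using MonoidAlgebra.induction with
  | zero => simp [show bar (0 : MonoidAlgebra F G) = 0 from rfl]
  | single_add g r f _ _ ih =>
    rw [add_mul, bar_add, bar_add, mul_add, ih]
    congr 1
    ext x
    rw [coeff_bar, coeff_single_mul_apply, bar_single, coeff_mul_single_apply, coeff_bar,
      mul_inv_rev, inv_inv, mul_comm]

lemma _root_.IsIdempotentElem.bar {e : MonoidAlgebra F G} (he : IsIdempotentElem e) :
    IsIdempotentElem (bar e) := by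
  rw [IsIdempotentElem, ← bar_mul, he.eq]

end Bar

variable {k : Type*} [CommSemiring k]

lemma commute_of_forall_mem_support {G : Type*} [Monoid G] {a b : MonoidAlgebra k G}
    (h : ∀ g ∈ a.coeff.support, ∀ g' ∈ b.coeff.support, Commute g g') : Commute a b := by
  rw [← sum_coeff_single a, ← sum_coeff_single b]
  exact Commute.sum_left _ _ _ fun g hg => Commute.sum_right _ _ _ fun g' hg' =>
    single_commute_single (h g hg g' hg') (Commute.all _ _)

lemma mul_comm_of_coeff_mul_comm {G : Type*} [Group G] {a : MonoidAlgebra k G}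
    (ha : ∀ g y : G, a.coeff (y * g) = a.coeff (g * y)) (x : MonoidAlgebra k G) :
    a * x = x * a := by
  induction x using MonoidAlgebra.induction_linear with
  | zero => simp
  | add x y hx hy => rw [mul_add, hx, hy, add_mul]
  | single g r =>
    ext y
    rw [coeff_mul_single_apply, coeff_single_mul_apply, ha g⁻¹ y, mul_comm]

end MonoidAlgebra

namespace DihedralGroup

open MonoidAlgebra

variable {n : ℕ}

lemma apply_mul_comm_of_apply_inv {M : Type*} [Zero M] {f : DihedralGroup n → M}
    (hsr : ∀ i, f (sr i) = 0) (hinv : ∀ x, f x⁻¹ = f x) (g y : DihedralGroup n) :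
    f (y * g) = f (g * y) := by
  rcases g with i | i <;> rcases y with j | j
  · rw [r_mul_r, r_mul_r, add_comm]
  · rw [sr_mul_r, r_mul_sr, hsr, hsr]
  · rw [r_mul_sr, sr_mul_r, hsr, hsr]
  · rw [sr_mul_sr, sr_mul_sr, ← hinv, inv_r, neg_sub]

lemma commute_of_coeff_sr_eq_zero {k : Type*} [CommSemiring k]
    {a b : MonoidAlgebra k (DihedralGroup n)}
    (ha : ∀ i, a.coeff (sr i) = 0) (hb : ∀ i, b.coeff (sr i) = 0) : Commute a b := by
  refine commute_of_forall_mem_support fun g hg g' hg' => ?_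
  rcases g with i | i
  · rcases g' with j | j
    · rw [Commute, SemiconjBy, r_mul_r, r_mul_r, add_comm]
    · exact absurd (hb j) (Finsupp.mem_support_iff.mp hg')
  · exact absurd (ha i) (Finsupp.mem_support_iff.mp hg)

end DihedralGroup

open DihedralGroup MonoidAlgebra

theorem selforthogonal_component_general (F : Type*) [Field F] (n : ℕ) [NeZero n]
    (e : MonoidAlgebra F (DihedralGroup n))
    (hH : ∀ i : ZMod n, e.coeff (DihedralGroup.sr i) = 0)
    (hidem : IsIdempotentElem e)
    (horth : e * MonoidAlgebra.bar e = 0) :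
    IsIdempotentElem (e + MonoidAlgebra.bar e) ∧
    (∀ x : MonoidAlgebra F (DihedralGroup n),
      (e + MonoidAlgebra.bar e) * x = x * (e + MonoidAlgebra.bar e)) ∧
    (∀ c c' : MonoidAlgebra F (DihedralGroup n),
      (∃ m, c = m * e) → (∃ m, c' = m * e) →
        c * MonoidAlgebra.bar c' = 0 ∧ ∑ g : DihedralGroup n, c.coeff g * c'.coeff g = 0) := by
  have hbarH : ∀ i, (bar e).coeff (sr i) = 0 := fun i => by rw [coeff_bar, inv_sr, hH]
  have hbar_mul : bar e * e = 0 := by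
    rw [(commute_of_coeff_sr_eq_zero hbarH hH).eq, horth]
  refine ⟨hidem.add hidem.bar (by rw [horth, hbar_mul, add_zero]), ?_, ?_⟩
  · refine mul_comm_of_coeff_mul_comm (apply_mul_comm_of_apply_inv (fun i => ?_) fun x => ?_)
    · simp only [coeff_add, Finsupp.add_apply, hH, hbarH, add_zero]
    · simp only [coeff_add, Finsupp.add_apply, coeff_bar, inv_inv, add_comm]
  · rintro _ _ ⟨m, rfl⟩ ⟨m', rfl⟩
    have hzero : m * e * bar (m' * e) = 0 := by
      rw [bar_mul, mul_assoc, ← mul_assoc e, horth, zero_mul, mul_zero]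
    exact ⟨hzero, by rw [← coeff_mul_bar_one, hzero, coeff_zero, Finsupp.zero_apply]⟩

/-- Let `F` be a field, `G` the dihedral group of order `2n` (`n` odd, coprime to the
characteristic), `H ⊆ G` the cyclic subgroup of rotations, and `e` a primitive idempotent
of `FH` with `e·ē = 0` (i.e. `ē ≠ e`). Then `e + ē` is a central idempotent of `FG`, and
the left ideal `C = FG·e` satisfies `C·C̄ = 0`; in particular `⟨c, c′⟩ = 0` for all
`c, c′ ∈ C`, so `C` is self-orthogonal. -/
theorem selforthogonal_component (F : Type*) [Field F] (n : ℕ) [NeZero n] (hn : Odd n)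
    (hchar : ((n : F) ≠ 0))
    (e : MonoidAlgebra F (DihedralGroup n))
    (hH : ∀ i : ZMod n, e.coeff (DihedralGroup.sr i) = 0)
    (hidem : IsIdempotentElem e)
    (hne : e ≠ 0)
    (hprim : ∀ f : MonoidAlgebra F (DihedralGroup n),
      (∀ i : ZMod n, f.coeff (DihedralGroup.sr i) = 0) → IsIdempotentElem f → f * e = f →
        f = 0 ∨ f = e)
    (horth : e * MonoidAlgebra.bar e = 0) :
    IsIdempotentElem (e + MonoidAlgebra.bar e) ∧
    (∀ x : MonoidAlgebra F (DihedralGroup n),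
      (e + MonoidAlgebra.bar e) * x = x * (e + MonoidAlgebra.bar e)) ∧
    (∀ c c' : MonoidAlgebra F (DihedralGroup n),
      (∃ m, c = m * e) → (∃ m, c' = m * e) →
        c * MonoidAlgebra.bar c' = 0 ∧ ∑ g : DihedralGroup n, c.coeff g * c'.coeff g = 0) :=
  selforthogonal_component_general F n e hH hidem horth
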